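/- arXiv:2512.19622 — 9 statements merged into one kernel-verified Lean document; each statement's English description precedes it below -/
import Mathlib

section
/- For an unconstrained monopsonistic firm with Cobb-Douglas production, the rent-sharing elasticity (ratio of the productivity-elasticity of the wage to the productivity-elasticity of value added) equals 1/(1+η): since d ln W*/d ln Φ = 1/(1+η(1−α)) and d ln VA*/d ln Φ = (1+η)/(1+η(1−α)), their ratio is 1/(1+η), independent of α. -/
/-! With `t = log Φ`, both `log W*` and `log VA*` are affine in `t`, so the elasticities are
their slopes; the common denominator `1 + η(1 - α)` cancels in the ratio. -/

open Real

lemma log_rpow_const_mul_exp {a : ℝ} (ha : 0 < a) (p t : ℝ) :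
    log ((a * exp t) ^ p) = p * (log a + t) := by
  rw [log_rpow (by positivity), log_mul ha.ne' (exp_ne_zero t), log_exp]

lemma hasDerivAt_log_rpow_const_mul_exp {a : ℝ} (ha : 0 < a) (p t : ℝ) :
    HasDerivAt (fun t => log ((a * exp t) ^ p)) p t := by
  simp_rw [log_rpow_const_mul_exp ha]
  simpa using ((hasDerivAt_id t).const_add (log a)).const_mul p

lemma hasDerivAt_log_exp_mul_rpow_rpow {a : ℝ} (ha : 0 < a) (p β t : ℝ) :
    HasDerivAt (fun t => log (exp t * ((a * exp t) ^ p) ^ β)) (1 + β * p) t := by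
  have hlog : (fun t => log (exp t * ((a * exp t) ^ p) ^ β)) =
      fun t => t + β * log ((a * exp t) ^ p) := by
    funext t
    rw [log_mul (exp_ne_zero t) (by positivity), log_exp, log_rpow (by positivity)]
  rw [hlog]
  exact (hasDerivAt_id t).add ((hasDerivAt_log_rpow_const_mul_exp ha p t).const_mul β)

/-- For an unconstrained monopsonist with Cobb-Douglas production, with
`W*(Φ) = (c'·Φ)^(1/(1+η(1−α)))` and `VA*(Φ) = Φ·L*(Φ)^α`,
`L*(Φ) = (c·Φ)^(η/(1+η(1−α)))`, the productivity elasticity of the wage is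
`1/(1+η(1−α))`, that of value added is `(1+η)/(1+η(1−α))`, and their ratio (the
rent-sharing elasticity) is `1/(1+η)`, independent of `α`. -/
theorem unconstrained_rent_sharing_elasticity
    (c c' η α : ℝ)
    (hc : 0 < c) (hc' : 0 < c') (hη : 0 < η)
    (hα : α ∈ Set.Ioo (0 : ℝ) 1) :
    (∀ t : ℝ, HasDerivAt
      (fun t : ℝ => Real.log ((c' * Real.exp t) ^ (1 / (1 + η * (1 - α)))))
      (1 / (1 + η * (1 - α))) t) ∧
    (∀ t : ℝ, HasDerivAt
      (fun t : ℝ => Real.log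
        (Real.exp t * ((c * Real.exp t) ^ (η / (1 + η * (1 - α)))) ^ α))
      ((1 + η) / (1 + η * (1 - α))) t) ∧
    (1 / (1 + η * (1 - α))) / ((1 + η) / (1 + η * (1 - α))) = 1 / (1 + η) := by
  have hD : 1 + η * (1 - α) ≠ 0 := by
    linarith [mul_pos hη (sub_pos.2 hα.2)]
  refine ⟨hasDerivAt_log_rpow_const_mul_exp hc' _, fun t => ?_,
    div_div_div_cancel_right₀ hD _ _⟩
  convert hasDerivAt_log_exp_mul_rpow_rpow hc (η / (1 + η * (1 - α))) α t using 1
  field_simp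
  ring
end

section
/- In the local-bargaining model with homogeneous production f(L) = L^α, the wage of a demand-constrained firm is W_D = W̲·(1 + κ·(1−α)/α), which is strictly greater than W̲ for any bargaining power κ ∈ (0,1), and is independent of the firm's productivity Φ. -/
/-- In the local-bargaining model with `f L = L^α`, a demand-constrained
firm with employment `L` solving `Φ·α·L^(α−1) = W̲` pays wage
`W_D = κ·Φ·L^α/L + (1−κ)·W̲ = W̲·(1 + κ(1−α)/α)`, which is strictly greater than
`W̲` for any `κ ∈ (0,1)` and independent of `Φ`. -/
theorem local_bargaining_demand_constrained_wage
    (Φ Wfloor α κ L : ℝ)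
    (hΦ : 0 < Φ) (hW : 0 < Wfloor)
    (hα : α ∈ Set.Ioo (0 : ℝ) 1) (hκ : κ ∈ Set.Ioo (0 : ℝ) 1)
    (hL : 0 < L) (hfoc : Φ * α * L ^ (α - 1) = Wfloor) :
    κ * (Φ * L ^ α / L) + (1 - κ) * Wfloor
      = Wfloor * (1 + κ * (1 - α) / α) ∧
    Wfloor < κ * (Φ * L ^ α / L) + (1 - κ) * Wfloor := by
  obtain ⟨hα0, hα1⟩ := hα
  obtain ⟨hκ0, hκ1⟩ := hκ
  have hsub : L ^ (α - 1) = L ^ α / L := by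
    rw [Real.rpow_sub hL, Real.rpow_one]
  have key : Φ * L ^ α / L = Wfloor / α := by
    rw [hsub] at hfoc
    field_simp at hfoc ⊢
    linarith [hfoc]
  rw [key]
  constructor
  · field_simp
    ring
  · have h1 : Wfloor / α > Wfloor := by
      rw [gt_iff_lt, lt_div_iff₀ hα0]
      nlinarith
    nlinarith
end

section
/- In the local-bargaining model with homogeneous production f(L) = L^α, the wage of a demand-constrained firm strictly exceeds its marginal revenue product of labor: W_D = W̲·(1 + κ(1−α)/α) > W̲ = Φ·f'(L_D), i.e., the firm exhibits a 'wage markup' W_D/MRPL = 1 + κ(1−α)/α > 1. -/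
/-- In the local-bargaining model with `f L = L^α`, the wage of a
demand-constrained firm strictly exceeds its marginal revenue product of labor:
`W_D > Φ·f'(L_D) = W̲`, with wage markup `W_D / MRPL = 1 + κ(1−α)/α > 1`. -/
theorem local_bargaining_wage_markup
    (Φ Wfloor α κ L : ℝ)
    (hΦ : 0 < Φ) (hW : 0 < Wfloor)
    (hα : α ∈ Set.Ioo (0 : ℝ) 1) (hκ : κ ∈ Set.Ioo (0 : ℝ) 1)
    (hL : 0 < L) (hfoc : Φ * α * L ^ (α - 1) = Wfloor) :
    Φ * α * L ^ (α - 1) < κ * (Φ * L ^ α / L) + (1 - κ) * Wfloor ∧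
    (κ * (Φ * L ^ α / L) + (1 - κ) * Wfloor) / (Φ * α * L ^ (α - 1))
      = 1 + κ * (1 - α) / α ∧
    1 < 1 + κ * (1 - α) / α := by
  obtain ⟨hα0, hα1⟩ := hα
  obtain ⟨hκ0, hκ1⟩ := hκ
  have hsub : L ^ (α - 1) = L ^ α / L := by
    rw [Real.rpow_sub hL, Real.rpow_one]
  have key : Φ * L ^ α / L = Wfloor / α := by
    rw [← hfoc, hsub]; field_simp
  rw [hfoc, key]
  have hmark : Wfloor < κ * (Wfloor / α) + (1 - κ) * Wfloor := by
    have : Wfloor < Wfloor / α := by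
      rw [lt_div_iff₀ hα0]; nlinarith
    nlinarith
  refine ⟨hmark, ?_, ?_⟩
  · field_simp; ring
  · have h1 : 0 < 1 - α := by linarith
    have : 0 < κ * (1 - α) / α := div_pos (mul_pos hκ0 h1) hα0
    linarith
end

section
/- For a supply-constrained firm under local bargaining with constant labor-supply elasticity η, the elasticities of employment and wages with respect to productivity are d ln L_S/d ln Φ = η·λ/(1+η·λ·(1−α(L_S))) and d ln W_S/d ln Φ = λ/(1+η·λ·(1−α(L_S))), where λ ∈ (0,1] is the share of the average product in the wage; hence their ratio equals exactly η, and both derivatives are strictly positive when λ > 0 and α(L_S) < 1 + 1/(η λ). -/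
/-- For a supply-constrained firm under local bargaining with constant
labor-supply elasticity `η`, the total-differentiation system
`dW = λ·(1 + (α−1)·dL)` (from the bargaining constraint) and `dL = η·dW` (from labor
supply) has unique solution `dL = ηλ/(1+ηλ(1−α))`, `dW = λ/(1+ηλ(1−α))`; hence
`dL/dW = η` and both are strictly positive when `λ > 0` and `α < 1 + 1/(ηλ)`. -/
theorem supply_constrained_bargaining_elasticities
    (η lam α dL dW : ℝ)
    (hη : 0 < η) (hlam0 : 0 < lam) (hlam1 : lam ≤ 1)
    (hα : α < 1 + 1 / (η * lam))
    (hbarg : dW = lam * (1 + (α - 1) * dL))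
    (hsupply : dL = η * dW) :
    dL = η * lam / (1 + η * lam * (1 - α)) ∧
    dW = lam / (1 + η * lam * (1 - α)) ∧
    dL / dW = η ∧
    0 < dL ∧ 0 < dW := by
  have hel : 0 < η * lam := mul_pos hη hlam0
  have hD : 0 < 1 + η * lam * (1 - α) := by
    have h1 : η * lam * (α - 1) < η * lam * (1 / (η * lam)) := by
      apply mul_lt_mul_of_pos_left _ hel
      linarith
    rw [mul_one_div, div_self hel.ne'] at h1
    nlinarith
  have hL : dL = η * lam / (1 + η * lam * (1 - α)) := by
    rw [eq_div_iff hD.ne']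
    nlinarith [hbarg, hsupply]
  have hW : dW = lam / (1 + η * lam * (1 - α)) := by
    rw [eq_div_iff hD.ne']
    nlinarith [hbarg, hsupply]
  have hWpos : 0 < dW := hW ▸ div_pos hlam0 hD
  refine ⟨hL, hW, ?_, ?_, hWpos⟩
  · rw [hsupply, mul_div_assoc, div_self hWpos.ne', mul_one]
  · rw [hsupply]; exact mul_pos hη hWpos
end

section
/- The supply-constrained rent-sharing elasticity under local bargaining, θ_S = λ/(1 + η·λ), is strictly positive for λ ∈ (0,1] and η > 0, and is strictly less than the unconstrained rent-sharing elasticity θ_U = 1/(1 + η(α + γ)) if and only if (1−λ)/λ > η·(α + γ − 1); in particular, under Cobb-Douglas production (α + γ = 1), θ_S < θ_U holds whenever λ < 1. -/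
/-- The supply-constrained rent-sharing elasticity under local
bargaining, `θ_S = λ/(1+ηλ)`, is strictly positive for `λ ∈ (0,1]` and `η > 0`, and
it is strictly less than the unconstrained elasticity `θ_U = 1/(1+η(α+γ))` if and
only if `(1−λ)/λ > η·(α+γ−1)`. In particular, under Cobb-Douglas production
(`α + γ = 1`), `θ_S < θ_U` whenever `λ < 1`. -/
theorem supply_constrained_rent_sharing_comparison
    (η lam α γ : ℝ)
    (hη : 0 < η) (hlam0 : 0 < lam) (hlam1 : lam ≤ 1)
    (hα : 0 < α) (hγ : 0 < γ) :
    0 < lam / (1 + η * lam) ∧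
    (lam / (1 + η * lam) < 1 / (1 + η * (α + γ)) ↔
      η * (α + γ - 1) < (1 - lam) / lam) ∧
    (α + γ = 1 → lam < 1 → lam / (1 + η * lam) < 1 / (1 + η * (α + γ))) := by
  have hd1 : 0 < 1 + η * lam := by positivity
  have hd2 : 0 < 1 + η * (α + γ) := by positivity
  have key : (lam / (1 + η * lam) < 1 / (1 + η * (α + γ)) ↔
      η * (α + γ - 1) < (1 - lam) / lam) := by
    rw [div_lt_div_iff₀ hd1 hd2, lt_div_iff₀ hlam0]
    constructor <;> intro h <;> nlinarith
  refine ⟨by positivity, key, fun h1 h2 => ?_⟩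
  rw [key, lt_div_iff₀ hlam0]
  nlinarith
end

section
/- Identification without constraints (rent-sharing): suppose for every firm j, Δln W_j = (1/(1+η(1−α)))·Δln Φ_j − ((1−α)/(1+η(1−α)))·Δln A_j and Δln VA_j = ((1+η)/(1+η(1−α)))·Δln Φ_j + (α/(1+η(1−α)))·Δln A_j, with common constants η > 0, α ∈ (0,1). If E[Δln A_j | Z=1] = E[Δln A_j | Z=0] and E[Δln Φ_j | Z=1] ≠ E[Δln Φ_j | Z=0], then the conventional estimator θ^CE = (E[Δln W|Z=1] − E[Δln W|Z=0]) / (E[Δln VA|Z=1] − E[Δln VA|Z=0]) equals 1/(1+η). -/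
open MeasureTheory ProbabilityTheory

lemma my_integral_lin {Ω : Type*} [MeasurableSpace Ω] (μ : Measure Ω)
    (s : Set Ω) (hs : μ s ≠ 0) (f g h : Ω → ℝ) (a b : ℝ)
    (hf : Integrable f μ) (hg : Integrable g μ)
    (heq : ∀ᵐ ω ∂μ, h ω = a * f ω + b * g ω) :
    ∫ ω, h ω ∂(μ[|s]) = a * ∫ ω, f ω ∂(μ[|s]) + b * ∫ ω, g ω ∂(μ[|s]) := by
  have hc : ∀ {u : Ω → ℝ}, Integrable u μ → Integrable u (μ[|s]) := by
    intro u hu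
    rw [ProbabilityTheory.cond]
    exact (hu.restrict).smul_measure (by simp [hs])
  have heq' : ∀ᵐ ω ∂(μ[|s]), h ω = a * f ω + b * g ω :=
    ProbabilityTheory.cond_absolutelyContinuous.ae_le heq
  calc ∫ ω, h ω ∂(μ[|s]) = ∫ ω, (a * f ω + b * g ω) ∂(μ[|s]) :=
        integral_congr_ae heq'
    _ = a * ∫ ω, f ω ∂(μ[|s]) + b * ∫ ω, g ω ∂(μ[|s]) := by
        rw [integral_add ((hc hf).const_mul a) ((hc hg).const_mul b),
          integral_const_mul, integral_const_mul]

/-- Identification without constraints (rent-sharing). If almost surely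
`Δln W = (1/(1+η(1−α)))·Δln Φ − ((1−α)/(1+η(1−α)))·Δln A` and
`Δln VA = ((1+η)/(1+η(1−α)))·Δln Φ + (α/(1+η(1−α)))·Δln A`, with `η > 0`,
`α ∈ (0,1)`, exogeneity of `Z` w.r.t. `Δln A` and relevance w.r.t. `Δln Φ`, then the
conventional rent-sharing estimator equals `1/(1+η)`. -/
theorem identification_rent_sharing
    {Ω : Type*} [MeasurableSpace Ω] (μ : Measure Ω) [IsProbabilityMeasure μ]
    (Z W VA Phi A : Ω → ℝ) (η α : ℝ)
    (hη : 0 < η) (hα : α ∈ Set.Ioo (0 : ℝ) 1)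
    (hZ1 : μ {ω | Z ω = 1} ≠ 0) (hZ0 : μ {ω | Z ω = 0} ≠ 0)
    (hWint : Integrable W μ) (hVAint : Integrable VA μ)
    (hPhiint : Integrable Phi μ) (hAint : Integrable A μ)
    (hWeq : ∀ᵐ ω ∂μ, W ω = (1 / (1 + η * (1 - α))) * Phi ω
      - ((1 - α) / (1 + η * (1 - α))) * A ω)
    (hVAeq : ∀ᵐ ω ∂μ, VA ω = ((1 + η) / (1 + η * (1 - α))) * Phi ω
      + (α / (1 + η * (1 - α))) * A ω)
    (hexog : ∫ ω, A ω ∂(μ[|{ω | Z ω = 1}]) = ∫ ω, A ω ∂(μ[|{ω | Z ω = 0}]))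
    (hrel : ∫ ω, Phi ω ∂(μ[|{ω | Z ω = 1}]) ≠ ∫ ω, Phi ω ∂(μ[|{ω | Z ω = 0}])) :
    (∫ ω, W ω ∂(μ[|{ω | Z ω = 1}]) - ∫ ω, W ω ∂(μ[|{ω | Z ω = 0}])) /
      (∫ ω, VA ω ∂(μ[|{ω | Z ω = 1}]) - ∫ ω, VA ω ∂(μ[|{ω | Z ω = 0}]))
      = 1 / (1 + η) := by
  set c := 1 + η * (1 - α) with hc
  have hcpos : 0 < c := by nlinarith [hα.1, hα.2]
  have hW : ∀ s : Set Ω, μ s ≠ 0 → ∫ ω, W ω ∂(μ[|s]) =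
      (1 / c) * ∫ ω, Phi ω ∂(μ[|s]) + (-((1 - α) / c)) * ∫ ω, A ω ∂(μ[|s]) := by
    intro s hs
    exact my_integral_lin μ s hs Phi A W _ _ hPhiint hAint
      (hWeq.mono fun ω h => by rw [h]; ring)
  have hVA : ∀ s : Set Ω, μ s ≠ 0 → ∫ ω, VA ω ∂(μ[|s]) =
      ((1 + η) / c) * ∫ ω, Phi ω ∂(μ[|s]) + (α / c) * ∫ ω, A ω ∂(μ[|s]) := by
    intro s hs
    exact my_integral_lin μ s hs Phi A VA _ _ hPhiint hAint
      (hVAeq.mono fun ω h => by rw [h])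
  rw [hW _ hZ1, hW _ hZ0, hVA _ hZ1, hVA _ hZ0, hexog]
  set P1 := ∫ ω, Phi ω ∂(μ[|{ω | Z ω = 1}])
  set P0 := ∫ ω, Phi ω ∂(μ[|{ω | Z ω = 0}])
  have hD : P1 - P0 ≠ 0 := sub_ne_zero.mpr hrel
  have h1η : (0:ℝ) < 1 + η := by linarith
  set IA := ∫ ω, A ω ∂(μ[|{ω | Z ω = 0}])
  have hd : ((1 + η) / c * P1 + α / c * IA) - ((1 + η) / c * P0 + α / c * IA) ≠ 0 := by
    have h : ((1 + η) / c * P1 + α / c * IA) - ((1 + η) / c * P0 + α / c * IA)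
        = (1 + η) * (P1 - P0) / c := by ring
    rw [h]
    exact div_ne_zero (mul_ne_zero h1η.ne' hD) hcpos.ne'
  rw [div_eq_div_iff hd h1η.ne']
  ring
end

section
/- Bias of the conventional labor supply estimator under constraints: in a population partitioned into always-unconstrained firms (share ρ_uu > 0), always-supply-constrained firms (share ρ_ss ≥ 0), and always-demand-constrained firms (share ρ_dd > 0) with ρ_uu + ρ_ss + ρ_dd = 1, where (i) unconstrained firms respond with Δln W = ζ_uu/(1+η(1−α)) and Δln L = η·ζ_uu/(1+η(1−α)) on average to the shock, (ii) supply-constrained firms have zero wage and employment responses, and (iii) demand-constrained firms have zero wage response and employment response ζ_dd/(1−α), with ζ_uu, ζ_dd > 0: the conventional estimator η^CE (ratio of the population-average employment response to the population-average wage response) satisfies η^CE − η = (ρ_dd/ρ_uu)·((1+η(1−α))/(1−α))·(ζ_dd/ζ_uu) > 0. -/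
/-- Bias of the conventional labor supply estimator under constraints.
With population shares `ρ_uu > 0`, `ρ_ss ≥ 0`, `ρ_dd > 0` summing to one, average
wage response `ρ_uu·ζ_uu/(1+η(1−α))` and average employment response
`ρ_uu·η·ζ_uu/(1+η(1−α)) + ρ_dd·ζ_dd/(1−α)` (constrained firms have zero wage
responses; supply-constrained firms have zero employment responses), the conventional
estimator `η^CE` satisfies
`η^CE − η = (ρ_dd/ρ_uu)·((1+η(1−α))/(1−α))·(ζ_dd/ζ_uu) > 0`. -/
theorem conventional_labor_supply_bias
    (ρuu ρss ρdd η α ζuu ζdd : ℝ)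
    (hρuu : 0 < ρuu) (hρss : 0 ≤ ρss) (hρdd : 0 < ρdd)
    (hsum : ρuu + ρss + ρdd = 1)
    (hη : 0 < η) (hα : α ∈ Set.Ioo (0 : ℝ) 1)
    (hζuu : 0 < ζuu) (hζdd : 0 < ζdd) :
    (ρuu * (η * ζuu / (1 + η * (1 - α))) + ρdd * (ζdd / (1 - α))) /
        (ρuu * (ζuu / (1 + η * (1 - α)))) - η
      = (ρdd / ρuu) * ((1 + η * (1 - α)) / (1 - α)) * (ζdd / ζuu) ∧
    0 < (ρdd / ρuu) * ((1 + η * (1 - α)) / (1 - α)) * (ζdd / ζuu) := by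
  obtain ⟨hα0, hα1⟩ := hα
  have h1 : (0:ℝ) < 1 - α := by linarith
  have h2 : (0:ℝ) < 1 + η * (1 - α) := by positivity
  constructor
  · field_simp
    ring
  · positivity
end

section
/- Attenuation of the conventional rent-sharing estimator under constraints: under the same partition, with unconstrained value-added response (1+η)·ζ_uu/(1+η(1−α)), supply-constrained value-added response ζ_ss > 0, demand-constrained value-added response ζ_dd/(1−α), unconstrained wage response ζ_uu/(1+η(1−α)), and zero wage responses for constrained firms, the conventional estimator θ^CE (ratio of average wage response to average value-added response) equals ι·(1/(1+η)), where ι = ρ_uu·(1+η)/(1+η(1−α)) / [ρ_uu·(1+η)/(1+η(1−α)) + ρ_ss·ζ_ss/ζ_uu + ρ_dd·(1/(1−α))·ζ_dd/ζ_uu]; moreover ι ∈ (0,1) whenever ρ_ss·ζ_ss + ρ_dd·ζ_dd > 0, so θ^CE < 1/(1+η). -/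
/-- Attenuation of the conventional rent-sharing estimator under
constraints. With shares `ρ_uu > 0`, `ρ_ss, ρ_dd ≥ 0`, `ρ_uu + ρ_ss + ρ_dd = 1`,
`ρ_ss + ρ_dd > 0`, wage responses `ζ_uu/(1+η(1−α))` for unconstrained firms and zero
for constrained firms, and value-added responses `(1+η)·ζ_uu/(1+η(1−α))`, `ζ_ss`,
`ζ_dd/(1−α)` respectively, the conventional estimator satisfies
`θ^CE = ι·(1/(1+η))` with the stated attenuation factor `ι ∈ (0,1)`, hence
`θ^CE < 1/(1+η)`. -/
theorem conventional_rent_sharing_attenuation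
    (ρuu ρss ρdd η α ζuu ζss ζdd : ℝ)
    (hρuu : 0 < ρuu) (hρss : 0 ≤ ρss) (hρdd : 0 ≤ ρdd)
    (hsum : ρuu + ρss + ρdd = 1) (hconstr : 0 < ρss + ρdd)
    (hη : 0 < η) (hα : α ∈ Set.Ioo (0 : ℝ) 1)
    (hζuu : 0 < ζuu) (hζss : 0 < ζss) (hζdd : 0 < ζdd) :
    (ρuu * (ζuu / (1 + η * (1 - α)))) /
        (ρuu * ((1 + η) * ζuu / (1 + η * (1 - α))) + ρss * ζss
          + ρdd * (ζdd / (1 - α)))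
      = (ρuu * ((1 + η) / (1 + η * (1 - α))) /
          (ρuu * ((1 + η) / (1 + η * (1 - α))) + ρss * (ζss / ζuu)
            + ρdd * (1 / (1 - α)) * (ζdd / ζuu))) * (1 / (1 + η)) ∧
    0 < ρuu * ((1 + η) / (1 + η * (1 - α))) /
          (ρuu * ((1 + η) / (1 + η * (1 - α))) + ρss * (ζss / ζuu)
            + ρdd * (1 / (1 - α)) * (ζdd / ζuu)) ∧
    ρuu * ((1 + η) / (1 + η * (1 - α))) /
          (ρuu * ((1 + η) / (1 + η * (1 - α))) + ρss * (ζss / ζuu)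
            + ρdd * (1 / (1 - α)) * (ζdd / ζuu)) < 1 ∧
    (ρuu * (ζuu / (1 + η * (1 - α)))) /
        (ρuu * ((1 + η) * ζuu / (1 + η * (1 - α))) + ρss * ζss
          + ρdd * (ζdd / (1 - α)))
      < 1 / (1 + η) := by
  obtain ⟨hα0, hα1⟩ := hα
  have h1α : 0 < 1 - α := by linarith
  have hK : 0 < 1 + η * (1 - α) := by nlinarith
  have hη1 : 0 < 1 + η := by linarith
  -- tail positivity
  have htail : 0 < ρss * (ζss / ζuu) + ρdd * (1 / (1 - α)) * (ζdd / ζuu) := by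
    rcases lt_or_ge 0 ρss with h | h
    · have : 0 < ρss * (ζss / ζuu) := by positivity
      have : 0 ≤ ρdd * (1 / (1 - α)) * (ζdd / ζuu) := by positivity
      nlinarith [mul_pos h (div_pos hζss hζuu)]
    · have hρss0 : ρss = 0 := le_antisymm h hρss
      have hdd : 0 < ρdd := by linarith [hconstr]
      have : 0 < ρdd * (1 / (1 - α)) * (ζdd / ζuu) := by positivity
      rw [hρss0]; linarith
  have hN : 0 < ρuu * ((1 + η) / (1 + η * (1 - α))) := by positivity
  have hD : 0 < ρuu * ((1 + η) / (1 + η * (1 - α))) + ρss * (ζss / ζuu)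
      + ρdd * (1 / (1 - α)) * (ζdd / ζuu) := by linarith
  have hD2 : 0 < ρuu * ((1 + η) * ζuu / (1 + η * (1 - α))) + ρss * ζss
      + ρdd * (ζdd / (1 - α)) := by
    have h1 : 0 < ρuu * ((1 + η) * ζuu / (1 + η * (1 - α))) := by positivity
    have h2 : 0 ≤ ρss * ζss := by positivity
    have h3 : 0 ≤ ρdd * (ζdd / (1 - α)) := by positivity
    linarith
  have hι : ρuu * ((1 + η) / (1 + η * (1 - α))) /
      (ρuu * ((1 + η) / (1 + η * (1 - α))) + ρss * (ζss / ζuu)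
        + ρdd * (1 / (1 - α)) * (ζdd / ζuu)) < 1 := by
    rw [div_lt_one hD]; linarith
  have heq : (ρuu * (ζuu / (1 + η * (1 - α)))) /
        (ρuu * ((1 + η) * ζuu / (1 + η * (1 - α))) + ρss * ζss
          + ρdd * (ζdd / (1 - α)))
        = (ρuu * ((1 + η) / (1 + η * (1 - α))) /
          (ρuu * ((1 + η) / (1 + η * (1 - α))) + ρss * (ζss / ζuu)
            + ρdd * (1 / (1 - α)) * (ζdd / ζuu))) * (1 / (1 + η)) := by
    rw [div_eq_iff hD2.ne']
    field_simp
  refine ⟨heq, div_pos hN hD, hι, ?_⟩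
  rw [heq]
  calc _ < 1 * (1 / (1 + η)) := by
          apply mul_lt_mul_of_pos_right hι (by positivity)
    _ = 1 / (1 + η) := one_mul _
end

section
/- Generalized profit-maximization wedge under a general binding wage constraint: if a demand-constrained firm chooses L to maximize Π(L) = Φ·f(L) − g(Υ(L), W̲)·L where Υ(L) = Φ f(L)/L, and at the interior optimum L* the elasticities λ = (∂g/∂Υ)·Υ/g > 0 and ψ = Υ'(L*)·L*/Υ(L*) = α(L*) − 1 < 0 are well-defined, then the first-order condition takes the form Φ·f'(L*) = (1 + λ·ψ)·g(Υ(L*), W̲), and since 1 + λψ < 1 whenever λ ∈ (0, 1/(1−α(L*))), the wage g(Υ(L*), W̲) strictly exceeds the marginal revenue product Φ·f'(L*). -/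
/-! With `Υ(L) = Φ f(L) / L`, the chain rule gives `Π'(L) = Φ f'(L) − g(Υ) − g'(Υ) (Φ f'(L) − Υ)`,
and `Φ f'(L) − Υ = Υ ψ` with `ψ = α(L) − 1`. So the first-order condition reads
`Φ f' = g + g' Υ ψ = (1 + λ ψ) g`, and the wedge `g' Υ ψ` is negative because `g' > 0`, `Υ > 0`
and `ψ < 0`. -/

noncomputable def profit (u g : ℝ → ℝ) (L : ℝ) : ℝ := u L - g (u L / L) * L

theorem hasDerivAt_profit {u g : ℝ → ℝ} {u' g' L : ℝ} (hu : HasDerivAt u u' L) (hL : L ≠ 0)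
    (hg : HasDerivAt g g' (u L / L)) :
    HasDerivAt (profit u g) (u' - g (u L / L) - g' * (u' - u L / L)) L := by
  have hΥ : HasDerivAt (fun y => u y / y) ((u' * L - u L * 1) / L ^ 2) L :=
    hu.div (hasDerivAt_id L) hL
  refine (hu.sub ((HasDerivAt.comp (h := fun y => u y / y) L hg hΥ).mul
    (hasDerivAt_id L))).congr_deriv ?_
  simp only [Function.comp_apply, id_eq]
  field_simp
  ring

theorem general_constraint_wage_markup_general
    (f f' g g' : ℝ → ℝ) (Φ Lstar Υs : ℝ)
    (hL : 0 < Lstar) (hΦ : 0 < Φ)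
    (hΥ : Υs = Φ * f Lstar / Lstar)
    (hfd : HasDerivAt f (f' Lstar) Lstar)
    (hgd : HasDerivAt g (g' Υs) Υs)
    (hfpos : 0 < f Lstar)
    (hgpos : 0 < g Υs) (hg'pos : 0 < g' Υs)
    (hαlt : Lstar * f' Lstar / f Lstar < 1)
    (hfoc : HasDerivAt (fun L : ℝ => Φ * f L - g (Φ * f L / L) * L) 0 Lstar) :
    Φ * f' Lstar
      = (1 + (g' Υs * Υs / g Υs) * (Lstar * f' Lstar / f Lstar - 1)) * g Υs ∧
    Φ * f' Lstar < g Υs := by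
  have hmarginal : Φ * f' Lstar - Υs = Υs * (Lstar * f' Lstar / f Lstar - 1) := by
    rw [hΥ]
    field_simp
  have hFOC : Φ * f' Lstar = g Υs + g' Υs * Υs * (Lstar * f' Lstar / f Lstar - 1) := by
    subst hΥ
    have hzero := (hasDerivAt_profit (hfd.const_mul Φ) hL.ne' hgd).unique hfoc
    linear_combination hzero + g' (Φ * f Lstar / Lstar) * hmarginal
  have hwedge : g' Υs * Υs * (Lstar * f' Lstar / f Lstar - 1) < 0 :=
    mul_neg_of_pos_of_neg (mul_pos hg'pos (hΥ ▸ by positivity)) (by linarith)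
  refine ⟨?_, by linarith⟩
  rw [hFOC]
  field_simp

/-- Generalized profit-maximization wedge under a general binding wage
constraint. If a demand-constrained firm's profit
`Π(L) = Φ·f(L) − g(Φ·f(L)/L)·L` has zero derivative at an interior optimum `L* > 0`,
then with `Υ* = Φ·f(L*)/L*`, `λ = g'(Υ*)·Υ*/g(Υ*) > 0` and
`ψ = α(L*) − 1 < 0` (where `α(L*) = L*·f'(L*)/f(L*) < 1`), the first-order condition
takes the form `Φ·f'(L*) = (1 + λ·ψ)·g(Υ*)`; and since `1 + λψ < 1` whenever
`λ ∈ (0, 1/(1−α(L*)))`, the wage strictly exceeds the marginal revenue product: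
`Φ·f'(L*) < g(Υ*)`. -/
theorem general_constraint_wage_markup
    (f f' g g' : ℝ → ℝ) (Φ Lstar Υs : ℝ)
    (hL : 0 < Lstar) (hΦ : 0 < Φ)
    (hΥ : Υs = Φ * f Lstar / Lstar)
    (hfd : HasDerivAt f (f' Lstar) Lstar)
    (hgd : HasDerivAt g (g' Υs) Υs)
    (hfpos : 0 < f Lstar) (hf'pos : 0 < f' Lstar)
    (hgpos : 0 < g Υs) (hg'pos : 0 < g' Υs)
    (hαlt : Lstar * f' Lstar / f Lstar < 1)
    (hlam : g' Υs * Υs / g Υs < 1 / (1 - Lstar * f' Lstar / f Lstar))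
    (hfoc : HasDerivAt (fun L : ℝ => Φ * f L - g (Φ * f L / L) * L) 0 Lstar) :
    Φ * f' Lstar
      = (1 + (g' Υs * Υs / g Υs) * (Lstar * f' Lstar / f Lstar - 1)) * g Υs ∧
    Φ * f' Lstar < g Υs :=
  general_constraint_wage_markup_general f f' g g' Φ Lstar Υs hL hΦ hΥ hfd hgd hfpos hgpos hg'pos
    hαlt hfoc
end
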